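/- Let N ≥ 2 and let {W_i}_{i=1}^N be a tight fusion frame for ℝ^M consisting of m-dimensional subspaces with all pairwise chordal distances equal to a common value d_c (an equi-distance tight fusion frame). Then {W_i}_{i=1}^N is an optimal Grassmannian packing: for every family {V_i}_{i=1}^N of m-dimensional subspaces of ℝ^M, min_{i≠j} d_c(V_i, V_j) ≤ min_{i≠j} d_c(W_i, W_j) = d_c. -/

import Mathlib

open Matrix BigOperators

/-- The Frobenius norm of a real square matrix. -/
noncomputable def frobeniusNorm {M : ℕ} (X : Matrix (Fin M) (Fin M) ℝ) : ℝ :=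
  Real.sqrt (Matrix.trace (Xᵀ * X))

/-- The chordal distance between two subspaces of `ℝ^M`, expressed in terms of their
orthogonal projection matrices: `d_c = (1/√2) ‖Q_V − Q_W‖_F`. -/
noncomputable def chordalDist {M : ℕ} (Q₁ Q₂ : Matrix (Fin M) (Fin M) ℝ) : ℝ :=
  (1 / Real.sqrt 2) * frobeniusNorm (Q₁ - Q₂)

/-!
For orthogonal projections `Qᵢ` of rank `m`, `d_c(Qᵢ, Qⱼ)² = m - tr (Qᵢ Qⱼ)`, so the sum of all
squared chordal distances of `N` such projections is `N² m - tr (S²)` with `S = ∑ Qᵢ`. As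
`tr S = N m` is fixed, Cauchy–Schwarz gives `tr (S²) ≥ (N m)² / M`, with equality when `S` is
scalar, i.e. for a tight fusion frame. So no family has a larger sum of squared distances than a
tight one; if the tight one is equi-distant, some pair of the other family is within `d_c`.
-/

namespace Matrix

variable {n : Type*} [Fintype n]

theorem trace_eq_finrank_range_mulVecLin {K : Type*} [Field K] [DecidableEq n]
    {X : Matrix n n K} (hX : IsIdempotentElem X) :
    X.trace = Module.finrank K (LinearMap.range X.mulVecLin) := by
  have hX' : IsIdempotentElem X.mulVecLin := by
    rw [IsIdempotentElem, Module.End.mul_eq_comp, ← mulVecLin_mul, hX.eq]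
  rw [← (LinearMap.IsIdempotentElem.isProj_range _ hX').trace, ← toLin'_apply', trace_toLin'_eq]

theorem sq_trace_le_card_mul_trace_mul_self {S : Matrix n n ℝ} (hS : S.IsSymm) :
    S.trace ^ 2 ≤ Fintype.card n * (S * S).trace := by
  have hdiag : ∑ i, S i i ^ 2 ≤ (S * S).trace :=
    calc ∑ i, S i i ^ 2 ≤ ∑ i, ∑ j, S j i ^ 2 := Finset.sum_le_sum fun i _ =>
          Finset.single_le_sum (f := fun j => S j i ^ 2) (fun j _ => sq_nonneg _)
            (Finset.mem_univ i)
      _ = (Sᵀ * S).trace := by simp only [trace, diag, mul_apply, transpose_apply, sq]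
      _ = (S * S).trace := by rw [hS.eq]
  calc S.trace ^ 2 ≤ Fintype.card n * ∑ i, S i i ^ 2 := sq_sum_le_card_mul_sum_sq
    _ ≤ Fintype.card n * (S * S).trace := by gcongr

theorem trace_mul_self_le_of_eq_smul_one [DecidableEq n] [Nonempty n] {S T : Matrix n n ℝ}
    {a : ℝ} (hS : S = a • 1) (hT : T.IsSymm) (htr : S.trace = T.trace) :
    (S * S).trace ≤ (T * T).trace := by
  have hcard : (0 : ℝ) < Fintype.card n := by exact_mod_cast Fintype.card_pos
  refine le_of_mul_le_mul_left ?_ hcard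
  calc Fintype.card n * (S * S).trace = S.trace ^ 2 := by
        subst hS; simp only [smul_mul_smul, one_mul, trace_smul, trace_one, smul_eq_mul]; ring
    _ = T.trace ^ 2 := by rw [htr]
    _ ≤ Fintype.card n * (T * T).trace := sq_trace_le_card_mul_trace_mul_self hT

end Matrix

theorem exists_ne_le_of_sum_sum_le {ι α : Type*} [Fintype ι] [Nontrivial ι]
    [AddCommMonoid α] [LinearOrder α] [IsOrderedCancelAddMonoid α] {f g : ι → ι → α}
    (hdiag : ∀ i, f i i = g i i) (h : ∑ i, ∑ j, f i j ≤ ∑ i, ∑ j, g i j) :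
    ∃ i j, i ≠ j ∧ f i j ≤ g i j := by
  by_contra! hlt
  obtain ⟨i₀, j₀, hne⟩ := exists_pair_ne ι
  have hle : ∀ p : ι × ι, g p.1 p.2 ≤ f p.1 p.2 := fun ⟨i, j⟩ => by
    rcases eq_or_ne i j with rfl | hij
    · exact (hdiag i).ge
    · exact (hlt i j hij).le
  have : ∑ p : ι × ι, g p.1 p.2 < ∑ p : ι × ι, f p.1 p.2 :=
    Finset.sum_lt_sum (fun p _ => hle p) ⟨(i₀, j₀), Finset.mem_univ _, hlt i₀ j₀ hne⟩
  rw [Fintype.sum_prod_type', Fintype.sum_prod_type'] at this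
  exact h.not_gt this

section ChordalDistance

variable {M : ℕ}

theorem frobeniusNorm_sq (X : Matrix (Fin M) (Fin M) ℝ) :
    frobeniusNorm X ^ 2 = (Xᵀ * X).trace :=
  Real.sq_sqrt (by simpa using (posSemidef_conjTranspose_mul_self X).trace_nonneg)

theorem chordalDist_nonneg (Q₁ Q₂ : Matrix (Fin M) (Fin M) ℝ) : 0 ≤ chordalDist Q₁ Q₂ :=
  mul_nonneg (by positivity) (Real.sqrt_nonneg _)

@[simp]
theorem chordalDist_self (Q : Matrix (Fin M) (Fin M) ℝ) : chordalDist Q Q = 0 := by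
  simp [chordalDist, frobeniusNorm]

theorem chordalDist_sq {Q₁ Q₂ : Matrix (Fin M) (Fin M) ℝ} (h₁s : Q₁.IsSymm) (h₂s : Q₂.IsSymm)
    (h₁ : IsIdempotentElem Q₁) (h₂ : IsIdempotentElem Q₂) :
    chordalDist Q₁ Q₂ ^ 2 = (Q₁.trace + Q₂.trace) / 2 - (Q₁ * Q₂).trace := by
  rw [chordalDist, mul_pow, frobeniusNorm_sq, transpose_sub, h₁s.eq, h₂s.eq, sub_mul, mul_sub,
    mul_sub, h₁.eq, h₂.eq, trace_sub, trace_sub, trace_sub, trace_mul_comm Q₂ Q₁, div_pow,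
    Real.sq_sqrt zero_le_two]
  ring

theorem sum_sum_chordalDist_sq {ι : Type*} [Fintype ι] {Q : ι → Matrix (Fin M) (Fin M) ℝ}
    (hs : ∀ i, (Q i).IsSymm) (hi : ∀ i, IsIdempotentElem (Q i)) {m : ℝ}
    (htr : ∀ i, (Q i).trace = m) :
    ∑ i, ∑ j, chordalDist (Q i) (Q j) ^ 2 =
      Fintype.card ι ^ 2 * m - ((∑ i, Q i) * ∑ i, Q i).trace := by
  simp only [chordalDist_sq (hs _) (hs _) (hi _) (hi _), htr, Finset.sum_mul_sum, trace_sum,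
    Finset.sum_sub_distrib, Finset.sum_const, Finset.card_univ, nsmul_eq_mul]
  ring

end ChordalDistance

theorem equidistance_tight_is_optimal_packing_general {M N : ℕ} (hN : 2 ≤ N) (hM : 0 < M)
    (A : ℝ)
    (W : Fin N → Submodule ℝ (Fin M → ℝ))
    (P : Fin N → Matrix (Fin M) (Fin M) ℝ)
    (hP : ∀ i, (P i).IsSymm ∧ P i * P i = P i ∧
      LinearMap.range (P i).mulVecLin = W i)
    (htight : ∑ i, P i = A • (1 : Matrix (Fin M) (Fin M) ℝ))
    (m : ℕ) (hdim : ∀ i, Module.finrank ℝ (W i) = m)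
    (dc : ℝ) (hdc : ∀ i j, i ≠ j → chordalDist (P i) (P j) = dc) :
    ∀ (V : Fin N → Submodule ℝ (Fin M → ℝ)) (Q : Fin N → Matrix (Fin M) (Fin M) ℝ),
      (∀ i, (Q i).IsSymm ∧ Q i * Q i = Q i ∧
        LinearMap.range (Q i).mulVecLin = V i) →
      (∀ i, Module.finrank ℝ (V i) = m) →
      ∃ i j, i ≠ j ∧ chordalDist (Q i) (Q j) ≤ dc := by
  intro V Q hQ hdimV
  have : Nonempty (Fin M) := Fin.pos_iff_nonempty.mp hM
  have : Nontrivial (Fin N) := Fin.nontrivial_iff_two_le.mpr hN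
  have hPtr (i : Fin N) : (P i).trace = m := by
    rw [trace_eq_finrank_range_mulVecLin (hP i).2.1, (hP i).2.2, hdim]
  have hQtr (i : Fin N) : (Q i).trace = m := by
    rw [trace_eq_finrank_range_mulVecLin (hQ i).2.1, (hQ i).2.2, hdimV]
  have hQsum : (∑ i, Q i).IsSymm := by
    rw [IsSymm, transpose_sum]
    exact Finset.sum_congr rfl fun i _ => (hQ i).1.eq
  have hpotential : ((∑ i, P i) * ∑ i, P i).trace ≤ ((∑ i, Q i) * ∑ i, Q i).trace :=
    trace_mul_self_le_of_eq_smul_one htight hQsum (by simp only [trace_sum, hPtr, hQtr])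
  obtain ⟨i, j, hij, hle⟩ := exists_ne_le_of_sum_sum_le
    (f := fun i j => chordalDist (Q i) (Q j) ^ 2) (g := fun i j => chordalDist (P i) (P j) ^ 2)
    (by simp) (by
      rw [sum_sum_chordalDist_sq (fun i => (hQ i).1) (fun i => (hQ i).2.1) hQtr,
        sum_sum_chordalDist_sq (fun i => (hP i).1) (fun i => (hP i).2.1) hPtr]
      linarith)
  refine ⟨i, j, hij, hdc i j hij ▸ ?_⟩
  exact (pow_le_pow_iff_left₀ (chordalDist_nonneg _ _) (chordalDist_nonneg _ _) two_ne_zero).mp hle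

/-- Let `N ≥ 2` and let `{W i}` be an equi-distance tight fusion frame
for `ℝ^M`: a tight fusion frame of `m`-dimensional subspaces with all pairwise chordal
distances equal to `d_c`.  Then `{W i}` is an optimal Grassmannian packing: for every
family `{V i}` of `m`-dimensional subspaces of `ℝ^M`, the minimum pairwise chordal
distance of `{V i}` is at most `d_c`, which is the minimum pairwise chordal distance of
`{W i}`. -/
theorem equidistance_tight_is_optimal_packing {M N : ℕ} (hN : 2 ≤ N) (hM : 0 < M)
    (A : ℝ) (hA : 0 < A)
    (W : Fin N → Submodule ℝ (Fin M → ℝ))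
    (P : Fin N → Matrix (Fin M) (Fin M) ℝ)
    (hP : ∀ i, (P i).IsSymm ∧ P i * P i = P i ∧
      LinearMap.range (P i).mulVecLin = W i)
    (htight : ∑ i, P i = A • (1 : Matrix (Fin M) (Fin M) ℝ))
    (m : ℕ) (hdim : ∀ i, Module.finrank ℝ (W i) = m)
    (dc : ℝ) (hdc : ∀ i j, i ≠ j → chordalDist (P i) (P j) = dc) :
    ∀ (V : Fin N → Submodule ℝ (Fin M → ℝ)) (Q : Fin N → Matrix (Fin M) (Fin M) ℝ),
      (∀ i, (Q i).IsSymm ∧ Q i * Q i = Q i ∧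
        LinearMap.range (Q i).mulVecLin = V i) →
      (∀ i, Module.finrank ℝ (V i) = m) →
      ∃ i j, i ≠ j ∧ chordalDist (Q i) (Q j) ≤ dc :=
  equidistance_tight_is_optimal_packing_general hN hM A W P hP htight m hdim dc hdc
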